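/- Let A ∈ ℝ^{m×n_A} and let B ∈ ℝ^{m×n_B} have unit-norm columns. Let W be a nonempty set of columns of B with σ_min(W) > 0, and suppose (T_i) is a greedy sequence for (A, B) such that no element of W is among the columns b_0, …, b_{r−1} selected in the first r steps, where r ≥ 32·|W|/σ_min(W). Then f_A(T_r) ≥ f_A(W)/2. -/

import Mathlib

open scoped RealInnerProductSpace

attribute [local instance] Classical.decEq

noncomputable def fVec {m : ℕ} (u : EuclideanSpace ℝ (Fin m))
    (S : Finset (EuclideanSpace ℝ (Fin m))) : ℝ :=
  ‖(Submodule.orthogonalProjectionOnto (Submodule.span ℝ (S : Set (EuclideanSpace ℝ (Fin m)))) u :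
      EuclideanSpace ℝ (Fin m))‖ ^ 2

noncomputable def fMat {m n : ℕ} (A : Fin n → EuclideanSpace ℝ (Fin m))
    (S : Finset (EuclideanSpace ℝ (Fin m))) : ℝ :=
  ∑ j, fVec (A j) S

noncomputable def sigmaMin {m : ℕ} (S : Finset (EuclideanSpace ℝ (Fin m))) : ℝ :=
  sInf {r : ℝ | ∃ α : S → ℝ, ∑ v, (α v) ^ 2 = 1 ∧
    r = ‖∑ v, α v • (v : EuclideanSpace ℝ (Fin m))‖ ^ 2}

noncomputable def sigmaMax {m : ℕ} (S : Finset (EuclideanSpace ℝ (Fin m))) : ℝ :=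
  sSup {r : ℝ | ∃ α : S → ℝ, ∑ v, (α v) ^ 2 = 1 ∧
    r = ‖∑ v, α v • (v : EuclideanSpace ℝ (Fin m))‖ ^ 2}

def IsGreedySeq {m nA nB : ℕ} (A : Fin nA → EuclideanSpace ℝ (Fin m))
    (B : Fin nB → EuclideanSpace ℝ (Fin m))
    (T : ℕ → Finset (EuclideanSpace ℝ (Fin m))) (b : ℕ → Fin nB) : Prop :=
  T 0 = ∅ ∧ ∀ i, T (i + 1) = insert (B (b i)) (T i) ∧
    ∀ j, fMat A (insert (B j) (T i)) ≤ fMat A (insert (B (b i)) (T i))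

/-!
Write `f = f_A(W)` and `Φ = f_A(S)` for the current greedy set `S`. Adding a vector `w` with
`‖w‖ ≤ 1` to `S` raises `f_A` by at least `∑ⱼ ⟪Aⱼ - Π_S Aⱼ, w⟫²`. Averaging over `w ∈ W` and using
the frame bound `σ_min(W) ‖Π_W u‖² ≤ ∑_{w ∈ W} ⟪u, w⟫²`, the greedy step gains at least
`σ_min(W) ∑ⱼ ‖Π_W (Aⱼ - Π_S Aⱼ)‖² / |W|`; since `‖Π_W Aⱼ‖ ≤ ‖Π_W (Aⱼ - Π_S Aⱼ)‖ + ‖Π_S Aⱼ‖`,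
Cauchy–Schwarz bounds this from below by `σ_min(W) (f - Φ)² / (4 f |W|)`. So while `Φ < f / 2`
every step gains at least `σ_min(W) f / (16 |W|)`, and `32 |W| / σ_min(W)` steps would already
give `Φ ≥ 2 f`.
-/

namespace Submodule

variable {E : Type*} [NormedAddCommGroup E] [InnerProductSpace ℝ E]
  {K L : Submodule ℝ E} [K.HasOrthogonalProjection] [L.HasOrthogonalProjection]

theorem norm_sq_starProjection_add_norm_sq_sub_of_le (hKL : K ≤ L) (u : E) :
    ‖K.starProjection u‖ ^ 2 + ‖L.starProjection u - K.starProjection u‖ ^ 2 =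
      ‖L.starProjection u‖ ^ 2 := by
  set p := K.starProjection u
  set q := L.starProjection u
  have hpK : p ∈ K := K.starProjection_apply_mem u
  have horth : ⟪p, q - p⟫ = 0 := by
    have hK := K.starProjection_inner_eq_zero u p hpK
    have hL := L.starProjection_inner_eq_zero u p (hKL hpK)
    rw [real_inner_comm, show q - p = (u - p) - (u - q) by abel, inner_sub_left, hK, hL, sub_zero]
  simpa [horth] using (norm_add_sq_real p (q - p)).symm

theorem norm_starProjection_le_of_le (hKL : K ≤ L) (u : E) :
    ‖K.starProjection u‖ ≤ ‖L.starProjection u‖ := by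
  refine (pow_le_pow_iff_left₀ (norm_nonneg _) (norm_nonneg _) two_ne_zero).mp ?_
  rw [← norm_sq_starProjection_add_norm_sq_sub_of_le hKL u]
  exact le_add_of_nonneg_right (sq_nonneg _)

theorem norm_sq_starProjection_add_inner_sq_le (hKL : K ≤ L) {w : E} (hwL : w ∈ L)
    (hw : ‖w‖ ≤ 1) (u : E) :
    ‖K.starProjection u‖ ^ 2 + ⟪u - K.starProjection u, w⟫ ^ 2 ≤ ‖L.starProjection u‖ ^ 2 := by
  set p := K.starProjection u
  set q := L.starProjection u
  have hinner : ⟪u - p, w⟫ = ⟪q - p, w⟫ := by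
    rw [show u - p = (u - q) + (q - p) by abel, inner_add_left,
      L.starProjection_inner_eq_zero u w hwL, zero_add]
  have hcs : |⟪q - p, w⟫| ≤ ‖q - p‖ :=
    (abs_real_inner_le_norm _ _).trans (mul_le_of_le_one_right (norm_nonneg _) hw)
  have hsq := pow_le_pow_left₀ (abs_nonneg _) hcs 2
  rw [sq_abs] at hsq
  rw [← norm_sq_starProjection_add_norm_sq_sub_of_le hKL u, hinner]
  gcongr

theorem norm_starProjection_le_norm_starProjection_sub_add (K L : Submodule ℝ E)
    [K.HasOrthogonalProjection] [L.HasOrthogonalProjection] (u : E) :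
    ‖K.starProjection u‖ ≤ ‖K.starProjection (u - L.starProjection u)‖ + ‖L.starProjection u‖ :=
  calc ‖K.starProjection u‖
      ≤ ‖K.starProjection (u - L.starProjection u)‖ + ‖K.starProjection (L.starProjection u)‖ := by
        rw [map_sub]; exact norm_le_norm_sub_add _ _
    _ ≤ _ := by gcongr; exact K.norm_starProjection_apply_le _

end Submodule

theorem sq_sub_sq_le_two_mul_mul {a c g : ℝ} (ha : 0 ≤ a) (h : a ≤ g + c) :
    a ^ 2 - c ^ 2 ≤ 2 * a * g := by
  rcases le_total a c with hac | hca
  · nlinarith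
  · nlinarith

theorem sq_sum_sq_sub_sum_sq_le {ι : Type*} (s : Finset ι) {a c g : ι → ℝ}
    (ha : ∀ i ∈ s, 0 ≤ a i)
    (h : ∀ i ∈ s, a i ≤ g i + c i) (hca : ∑ i ∈ s, c i ^ 2 ≤ ∑ i ∈ s, a i ^ 2) :
    (∑ i ∈ s, a i ^ 2 - ∑ i ∈ s, c i ^ 2) ^ 2 ≤ 4 * (∑ i ∈ s, a i ^ 2) * ∑ i ∈ s, g i ^ 2 := by
  have hlin : ∑ i ∈ s, a i ^ 2 - ∑ i ∈ s, c i ^ 2 ≤ 2 * ∑ i ∈ s, a i * g i := by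
    rw [← Finset.sum_sub_distrib, Finset.mul_sum]
    exact Finset.sum_le_sum fun i hi =>
      (sq_sub_sq_le_two_mul_mul (ha i hi) (h i hi)).trans_eq (by ring)
  calc (∑ i ∈ s, a i ^ 2 - ∑ i ∈ s, c i ^ 2) ^ 2 ≤ (2 * ∑ i ∈ s, a i * g i) ^ 2 := by
        gcongr
    _ = 4 * (∑ i ∈ s, a i * g i) ^ 2 := by ring
    _ ≤ 4 * ((∑ i ∈ s, a i ^ 2) * ∑ i ∈ s, g i ^ 2) := by
        gcongr; exact Finset.sum_mul_sq_le_sq_mul_sq s a g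
    _ = _ := by ring

theorem min_le_of_forall_lt_add_le {Φ : ℕ → ℝ} {c δ : ℝ} (hmono : Monotone Φ) (h0 : 0 ≤ Φ 0)
    (hstep : ∀ i, Φ i < c → Φ i + δ ≤ Φ (i + 1)) (n : ℕ) : min c (n * δ) ≤ Φ n := by
  induction n with
  | zero => simpa using Or.inr h0
  | succ n ih =>
    by_cases hn : Φ n < c
    · have hnδ : n * δ ≤ Φ n := (min_le_iff.mp ih).resolve_left hn.not_ge
      push_cast
      exact min_le_of_right_le (by linarith [hstep n hn])
    · exact min_le_of_left_le ((not_lt.mp hn).trans (hmono n.le_succ))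

section ColumnSubset

variable {m : ℕ}

local notation "𝔼" => EuclideanSpace ℝ (Fin m)

local notation "π[" S "]" => Submodule.starProjection (Submodule.span ℝ ((S : Finset 𝔼) : Set 𝔼))

theorem fVec_mono (u : 𝔼) {S S' : Finset 𝔼} (h : S ⊆ S') : fVec u S ≤ fVec u S' :=
  pow_le_pow_left₀ (norm_nonneg _)
    (Submodule.norm_starProjection_le_of_le (Submodule.span_mono (Finset.coe_subset.mpr h)) u) 2

theorem fMat_nonneg {n : ℕ} (A : Fin n → 𝔼) (S : Finset 𝔼) : 0 ≤ fMat A S :=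
  Finset.sum_nonneg fun _ _ => sq_nonneg _

theorem fMat_mono {n : ℕ} (A : Fin n → 𝔼) {S S' : Finset 𝔼} (h : S ⊆ S') :
    fMat A S ≤ fMat A S' :=
  Finset.sum_le_sum fun j _ => fVec_mono (A j) h

theorem fVec_add_inner_sq_le_fVec_insert (S : Finset 𝔼) (u : 𝔼) {w : 𝔼} (hw : ‖w‖ ≤ 1) :
    fVec u S + ⟪u - π[S] u, w⟫ ^ 2 ≤ fVec u (insert w S) :=
  Submodule.norm_sq_starProjection_add_inner_sq_le
    (Submodule.span_mono (Finset.coe_subset.mpr (Finset.subset_insert w S)))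
    (Submodule.subset_span (by simp)) hw u

theorem sigmaMin_nonneg (W : Finset 𝔼) : 0 ≤ sigmaMin W :=
  Real.sInf_nonneg (by rintro _ ⟨α, -, rfl⟩; positivity)

theorem sigmaMin_mul_sum_sq_le (W : Finset 𝔼) (β : 𝔼 → ℝ) :
    sigmaMin W * ∑ v ∈ W, β v ^ 2 ≤ ‖∑ v ∈ W, β v • v‖ ^ 2 := by
  set s := ∑ v ∈ W, β v ^ 2
  rcases (show 0 ≤ s by positivity).eq_or_lt with hs | hs
  · rw [← hs, mul_zero]; positivity
  set c := Real.sqrt s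
  have hc : 0 < c := Real.sqrt_pos.mpr hs
  have hunit : ∑ v : W, (β v / c) ^ 2 = 1 := by
    rw [Finset.sum_coe_sort W fun v => (β v / c) ^ 2]
    simp only [div_pow, ← Finset.sum_div, c, Real.sq_sqrt hs.le]
    exact div_self hs.ne'
  have hnorm : ‖∑ v : W, (β v / c) • (v : 𝔼)‖ ^ 2 = ‖∑ v ∈ W, β v • v‖ ^ 2 / s := by
    rw [Finset.sum_coe_sort W fun v => (β v / c) • v]
    simp only [div_eq_inv_mul, mul_smul, ← Finset.smul_sum, norm_smul, mul_pow, norm_inv,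
      Real.norm_eq_abs, abs_of_pos hc, inv_pow, c, Real.sq_sqrt hs.le]
  have hle : sigmaMin W ≤ ‖∑ v ∈ W, β v • v‖ ^ 2 / s := by
    rw [← hnorm]
    exact csInf_le ⟨0, by rintro _ ⟨α, -, rfl⟩; positivity⟩ ⟨_, hunit, rfl⟩
  exact (le_div_iff₀ hs).mp hle

theorem sigmaMin_mul_fVec_le (W : Finset 𝔼) (u : 𝔼) :
    sigmaMin W * fVec u W ≤ ∑ v ∈ W, ⟪u, v⟫ ^ 2 := by
  obtain ⟨β, -, hβ⟩ :=
    Submodule.mem_span_finset.mp ((Submodule.span ℝ (W : Set 𝔼)).starProjection_apply_mem u)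
  set p := π[W] u
  have hp : ‖p‖ ^ 2 = ∑ v ∈ W, β v * ⟪u, v⟫ := by
    have horth := (Submodule.span ℝ (W : Set 𝔼)).starProjection_inner_eq_zero u p
      (Submodule.starProjection_apply_mem _ u)
    rw [inner_sub_left] at horth
    rw [← real_inner_self_eq_norm_sq, ← sub_eq_zero.mp horth, ← hβ, inner_sum]
    simp only [real_inner_smul_right]
  have hσβ : sigmaMin W * ∑ v ∈ W, β v ^ 2 ≤ ‖p‖ ^ 2 := hβ ▸ sigmaMin_mul_sum_sq_le W β
  have hcs := Finset.sum_mul_sq_le_sq_mul_sq W β fun v => ⟪u, v⟫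
  rw [← hp] at hcs
  have hσ := sigmaMin_nonneg W
  show sigmaMin W * ‖p‖ ^ 2 ≤ _
  rcases (sq_nonneg ‖p‖).eq_or_lt with h0 | h0
  · rw [← h0, mul_zero]; positivity
  -- `σ ‖p‖⁴ ≤ σ (∑ β²) (∑ ⟪u, v⟫²) ≤ ‖p‖² ∑ ⟪u, v⟫²`
  refine le_of_mul_le_mul_right ?_ h0
  nlinarith [mul_le_mul_of_nonneg_left hcs hσ, mul_le_mul_of_nonneg_right hσβ
    (show 0 ≤ ∑ v ∈ W, ⟪u, v⟫ ^ 2 by positivity)]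

theorem card_mul_fMat_add_sigmaMin_mul_le {n : ℕ} (A : Fin n → 𝔼) {W S S' : Finset 𝔼}
    (hW : ∀ w ∈ W, ‖w‖ ≤ 1) (hS' : ∀ w ∈ W, fMat A (insert w S) ≤ fMat A S') :
    W.card * fMat A S + sigmaMin W * ∑ j, fVec (A j - π[S] (A j)) W ≤ W.card * fMat A S' :=
  calc (W.card : ℝ) * fMat A S + sigmaMin W * ∑ j, fVec (A j - π[S] (A j)) W
      ≤ W.card * fMat A S + ∑ j, ∑ w ∈ W, ⟪A j - π[S] (A j), w⟫ ^ 2 := by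
        rw [Finset.mul_sum]; gcongr with j; exact sigmaMin_mul_fVec_le W _
    _ = ∑ w ∈ W, (fMat A S + ∑ j, ⟪A j - π[S] (A j), w⟫ ^ 2) := by
        rw [Finset.sum_comm, Finset.sum_add_distrib, Finset.sum_const, nsmul_eq_mul]
    _ ≤ ∑ w ∈ W, fMat A S' := Finset.sum_le_sum fun w hw =>
        (Finset.sum_add_distrib.symm.trans_le (Finset.sum_le_sum fun j _ =>
          fVec_add_inner_sq_le_fVec_insert S (A j) (hW w hw))).trans (hS' w hw)
    _ = W.card * fMat A S' := by rw [Finset.sum_const, nsmul_eq_mul]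

theorem sq_fMat_sub_fMat_le {n : ℕ} (A : Fin n → 𝔼) {W S : Finset 𝔼}
    (h : fMat A S ≤ fMat A W) :
    (fMat A W - fMat A S) ^ 2 ≤ 4 * fMat A W * ∑ j, fVec (A j - π[S] (A j)) W :=
  sq_sum_sq_sub_sum_sq_le Finset.univ (a := fun j => ‖π[W] (A j)‖)
    (c := fun j => ‖π[S] (A j)‖) (g := fun j => ‖π[W] (A j - π[S] (A j))‖)
    (fun _ _ => norm_nonneg _)
    (fun j _ => Submodule.norm_starProjection_le_norm_starProjection_sub_add _ _ (A j)) h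

theorem sigmaMin_mul_fMat_le_of_forall_insert_le {n : ℕ} (A : Fin n → 𝔼) {W S S' : Finset 𝔼}
    (hW : ∀ w ∈ W, ‖w‖ ≤ 1) (hS' : ∀ w ∈ W, fMat A (insert w S) ≤ fMat A S')
    (hS : 2 * fMat A S < fMat A W) :
    sigmaMin W * fMat A W ≤ 16 * W.card * (fMat A S' - fMat A S) := by
  have hΦ := fMat_nonneg A S
  have hσ := sigmaMin_nonneg W
  have hgain := card_mul_fMat_add_sigmaMin_mul_le A hW hS'
  have hgap := sq_fMat_sub_fMat_le A (W := W) (S := S) (by linarith)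
  set f := fMat A W
  set G := ∑ j, fVec (A j - π[S] (A j)) W
  have hf : 0 < f := by linarith
  refine le_of_mul_le_mul_left ?_ hf
  calc f * (sigmaMin W * f) = 4 * (sigmaMin W * (f / 2) ^ 2) := by ring
    _ ≤ 4 * (sigmaMin W * (f - fMat A S) ^ 2) := by gcongr; linarith
    _ ≤ 4 * (sigmaMin W * (4 * f * G)) := by gcongr
    _ = 16 * f * (sigmaMin W * G) := by ring
    _ ≤ 16 * f * (W.card * (fMat A S' - fMat A S)) :=
        mul_le_mul_of_nonneg_left (by linarith) (by positivity)
    _ = f * (16 * W.card * (fMat A S' - fMat A S)) := by ring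

end ColumnSubset

theorem greedy_css_unselected_half_general {m nA nB : ℕ}
    (A : Fin nA → EuclideanSpace ℝ (Fin m)) (B : Fin nB → EuclideanSpace ℝ (Fin m))
    (hB : ∀ j, ‖B j‖ = 1)
    (W : Finset (EuclideanSpace ℝ (Fin m))) (hWne : W.Nonempty)
    (hWsub : W ⊆ Finset.image B Finset.univ)
    (hσ : 0 < sigmaMin W)
    (T : ℕ → Finset (EuclideanSpace ℝ (Fin m))) (b : ℕ → Fin nB)
    (hT : IsGreedySeq A B T b)
    (r : ℕ) (hr : (32 * W.card : ℝ) / sigmaMin W ≤ r) :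
    fMat A W / 2 ≤ fMat A (T r) := by
  obtain ⟨hT0, hTs⟩ := hT
  have hW : ∀ w ∈ W, ‖w‖ ≤ 1 := by
    intro w hw
    obtain ⟨j, -, rfl⟩ := Finset.mem_image.mp (hWsub hw)
    exact (hB j).le
  have hk : (0 : ℝ) < W.card := by exact_mod_cast hWne.card_pos
  set δ := sigmaMin W * fMat A W / (16 * W.card) with hδ
  have hmono : Monotone fun i => fMat A (T i) :=
    monotone_nat_of_le_succ fun i => (hTs i).1 ▸ fMat_mono A (Finset.subset_insert _ _)
  have hstep : ∀ i, fMat A (T i) < fMat A W / 2 → fMat A (T i) + δ ≤ fMat A (T (i + 1)) := by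
    intro i hi
    have hgain := sigmaMin_mul_fMat_le_of_forall_insert_le A hW
      (fun w hw => by
        obtain ⟨j, -, rfl⟩ := Finset.mem_image.mp (hWsub hw)
        exact (hTs i).1 ▸ (hTs i).2 j) (by linarith)
    rw [hδ, ← le_sub_iff_add_le', div_le_iff₀ (by positivity)]
    linarith
  have hrδ : fMat A W / 2 ≤ r * δ := by
    rw [div_le_iff₀ hσ] at hr
    rw [hδ, mul_div_assoc', le_div_iff₀ (by positivity)]
    nlinarith [fMat_nonneg A W]
  calc fMat A W / 2 = min (fMat A W / 2) (r * δ) := (min_eq_left hrδ).symm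
    _ ≤ fMat A (T r) := min_le_of_forall_lt_add_le hmono (by simp [hT0, fMat_nonneg]) hstep r

/-- If greedy never selects any column of W during the first r steps, with
r ≥ 32·|W|/σ_min(W), then greedy's value is at least half of f_A(W). -/
theorem greedy_css_unselected_half {m nA nB : ℕ}
    (A : Fin nA → EuclideanSpace ℝ (Fin m)) (B : Fin nB → EuclideanSpace ℝ (Fin m))
    (hB : ∀ j, ‖B j‖ = 1)
    (W : Finset (EuclideanSpace ℝ (Fin m))) (hWne : W.Nonempty)
    (hWsub : W ⊆ Finset.image B Finset.univ)
    (hσ : 0 < sigmaMin W)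
    (T : ℕ → Finset (EuclideanSpace ℝ (Fin m))) (b : ℕ → Fin nB)
    (hT : IsGreedySeq A B T b)
    (r : ℕ) (hr : (32 * W.card : ℝ) / sigmaMin W ≤ r)
    (hnosel : ∀ i < r, B (b i) ∉ W) :
    fMat A W / 2 ≤ fMat A (T r) :=
  greedy_css_unselected_half_general A B hB W hWne hWsub hσ T b hT r hr
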